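/- The language L = a*ba* ∪ a^+ over Σ = {a, b} is the maximal language Red(Φ) defined by the non-conflictual tagged 3-word set Φ = {#[b, a]b, #⊙#, #[a, b]#, a⊙a, b[a, a]#}. -/

import Mathlib

/-!
Common framework from the paper "Higher-order Operator Precedence Languages":
tagged words over an alphabet `α` (with a distinguished end-mark letter
`hash`), the tag set Δ = {[, ], ⊙}, tagged `k`-word factors, conflictual sets,
the strictly-locally-testable tagged language `Loc(Φ)`, handles, reductions
`⇝_Φ`, and the (tagged) maximal languages `RedBar Φ` / `Red Φ`.

Conventions: an end-word `⍟` is the alternating word `(#⊙)^m #` of (tagged)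
length `k-2`, so that it contributes `(k-1)/2` end-marks on each side,
matching all the examples of the paper.
-/

namespace HOP

/-- The three tags `[`, `]`, `⊙`. -/
inductive Tagg : Type where
  | lb : Tagg
  | rb : Tagg
  | dot : Tagg
deriving DecidableEq

/-- Symbols: either a terminal letter of `α` or a tag. -/
abbrev Sym (α : Type) := α ⊕ Tagg

/-- The projection `σ` erasing all tags. -/
def erase {α : Type} (w : List (Sym α)) : List α := w.filterMap Sum.getLeft?

/-- Tagged words: words in `Σ(ΔΣ)*`, i.e. alternating terminals and tags,
beginning and ending with a terminal. -/
inductive IsTagged {α : Type} : List (Sym α) → Prop where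
  | single (a : α) : IsTagged [Sum.inl a]
  | cons (a : α) (t : Tagg) {w : List (Sym α)} :
      IsTagged w → IsTagged (Sum.inl a :: Sum.inr t :: w)

/-- `φ_k(w)`: the set of tagged `k`-words occurring as factors of `w`. -/
def taggedFactors {α : Type} (k : ℕ) (w : List (Sym α)) : Set (List (Sym α)) :=
  {u | u.length = k ∧ IsTagged u ∧ u <:+: w}

/-- A set of tagged words is conflictual iff it contains two distinct words
with the same tag-erasure. -/
def Conflictual {α : Type} (S : Set (List (Sym α))) : Prop :=
  ∃ x ∈ S, ∃ y ∈ S, x ≠ y ∧ erase x = erase y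

def NonConflictual {α : Type} (S : Set (List (Sym α))) : Prop := ¬ Conflictual S

/-- `S` is a set of tagged `k`-words. -/
def TaggedKWords {α : Type} (k : ℕ) (S : Set (List (Sym α))) : Prop :=
  ∀ u ∈ S, IsTagged u ∧ u.length = k

/-- `hashWord hash n = # ⊙ # ⊙ … #` with `n+1` end-marks (tagged length `2n+1`). -/
def hashWord {α : Type} (hash : α) : ℕ → List (Sym α)
  | 0 => [Sum.inl hash]
  | n + 1 => Sum.inl hash :: Sum.inr Tagg.dot :: hashWord hash n

/-- The end-word `⍟ ∈ (#⊙)*#` used with width `k`: it has tagged length `k-2`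
(for odd `k ≥ 3`), i.e. `(k-1)/2` end-marks. -/
def endwFor {α : Type} (hash : α) (k : ℕ) : List (Sym α) := hashWord hash ((k - 3) / 2)

/-- `wrap hash k w = ⍟ [ w ] ⍟`. -/
def wrap {α : Type} (hash : α) (k : ℕ) (w : List (Sym α)) : List (Sym α) :=
  endwFor hash k ++ Sum.inr Tagg.lb :: (w ++ Sum.inr Tagg.rb :: endwFor hash k)

/-- `finalWord hash k = ⍟ ⊙ ⍟`, the target of a complete reduction. -/
def finalWord {α : Type} (hash : α) (k : ℕ) : List (Sym α) :=
  endwFor hash k ++ Sum.inr Tagg.dot :: endwFor hash k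

/-- The (full-word form of the) `k`-strictly-locally-testable tagged language:
all tagged `k`-word factors belong to `Φ`.  A tagged word `w` is in `Loc(Φ)`
in the sense of the paper iff `wrap hash k w ∈ LocFull k Φ`. -/
def LocFull {α : Type} (k : ℕ) (Φ : Set (List (Sym α))) : Set (List (Sym α)) :=
  {w | IsTagged w ∧ taggedFactors k w ⊆ Φ}

/-- `Loc(Φ)` as a set of tagged words `w` (tested on `⍟[w]⍟`). -/
def LocTagged {α : Type} (hash : α) (k : ℕ) (Φ : Set (List (Sym α))) :
    Set (List (Sym α)) :=
  {w | IsTagged w ∧ wrap hash k w ∈ LocFull k Φ}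

/-- The body `x` of a handle `[x]`: a tagged word over `Σ - {#}` whose tags are
all `⊙`. -/
def IsHandleBody {α : Type} (hash : α) (x : List (Sym α)) : Prop :=
  IsTagged x ∧ (∀ t : Tagg, Sum.inr t ∈ x → t = Tagg.dot) ∧ Sum.inl hash ∉ x

/-- One reduction step `w[x]z ⇝_Φ w s z`, allowed when `[x]` is a handle and
both source and target have all their tagged `k`-factors in `Φ`. -/
def RStep {α : Type} (hash : α) (k : ℕ) (Φ : Set (List (Sym α)))
    (u v : List (Sym α)) : Prop :=
  ∃ w x z, ∃ s : Tagg, IsHandleBody hash x ∧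
    u = w ++ Sum.inr Tagg.lb :: (x ++ Sum.inr Tagg.rb :: z) ∧
    v = w ++ Sum.inr s :: z ∧
    u ∈ LocFull k Φ ∧ v ∈ LocFull k Φ

/-- `⇝*_Φ`. -/
def Reduces {α : Type} (hash : α) (k : ℕ) (Φ : Set (List (Sym α))) :
    List (Sym α) → List (Sym α) → Prop :=
  Relation.ReflTransGen (RStep hash k Φ)

/-- The tagged maximal language `Red̄(Φ)`. -/
def RedBar {α : Type} (hash : α) (k : ℕ) (Φ : Set (List (Sym α))) :
    Set (List (Sym α)) :=
  {w | IsTagged w ∧ Reduces hash k Φ (wrap hash k w) (finalWord hash k)}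

/-- The maximal language `Red(Φ) = σ(Red̄(Φ))`. -/
def Red {α : Type} (hash : α) (k : ℕ) (Φ : Set (List (Sym α))) : Set (List α) :=
  erase '' RedBar hash k Φ

/-- Length-`j` factors of a plain word. -/
def plainFactors {α : Type} (j : ℕ) (w : List α) : Set (List α) :=
  {u | u.length = j ∧ u <:+: w}

/-- The `j`-strictly-locally-testable (plain) language `Loc(F)`, with
end-words `#^(j-1)`; as usual the language is `ε`-free and over `Σ - {#}`. -/
def LocPlain {α : Type} (hash : α) (j : ℕ) (F : Set (List α)) : Set (List α) :=
  {x | x ≠ [] ∧ hash ∉ x ∧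
    plainFactors j
      (List.replicate (j - 1) hash ++ x ++ List.replicate (j - 1) hash) ⊆ F}

end HOP

namespace HOP

/-- The alphabet `{a, b, #}`. -/
inductive ABH : Type where
  | a : ABH
  | b : ABH
  | h : ABH
deriving DecidableEq

open ABH Tagg

/-- The tagged 3-word set `Φ = {#[b, a]b, #⊙#, #[a, b]#, a⊙a, b[a, a]#}`. -/
def Phi7 : Set (List (Sym ABH)) :=
  {[Sum.inl h, Sum.inr lb, Sum.inl b],
   [Sum.inl a, Sum.inr rb, Sum.inl b],
   [Sum.inl h, Sum.inr dot, Sum.inl h],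
   [Sum.inl h, Sum.inr lb, Sum.inl a],
   [Sum.inl b, Sum.inr rb, Sum.inl h],
   [Sum.inl a, Sum.inr dot, Sum.inl a],
   [Sum.inl b, Sum.inr lb, Sum.inl a],
   [Sum.inl a, Sum.inr rb, Sum.inl h]}

/-- `L = a* b a* ∪ a⁺` over `{a, b}`. -/
def L7 : Set (List ABH) :=
  {x | (∃ n m : ℕ, x = List.replicate n a ++ b :: List.replicate m a) ∨
       (∃ n : ℕ, 1 ≤ n ∧ x = List.replicate n a)}


/-!
Every word of `L` has an explicit tagged preimage, `a⊙⋯⊙a` or `[a⊙⋯⊙a]b[a⊙⋯⊙a]`, whose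
`a`-blocks are handles that can be reduced one at a time, down to `#[b]#` or `#[a⊙⋯⊙a]#`,
which reduce to `#⊙#`.

Conversely, reduction preserves the first and last symbols and the number of `#`, so a word
reducing to `#⊙#` starts and ends with `#` and has no other `#`. A handle containing `b` must be
`[b]`, since `Φ` has no triple `b⊙_` or `_⊙b`; its neighbours must be `#`, since `#[b` and `b]#`
are the only triples around it, so that step is the last one, on `#[b]#`. Thus no earlier step
deletes a `b`, and a word of `Red(Φ)` is a word over `{a, b}` with at most one `b`.
-/

instance {α β : Type} [BEq α] [LawfulBEq α] [BEq β] [LawfulBEq β] : LawfulBEq (α ⊕ β) where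
  eq_of_beq {x y} hxy := by
    cases x <;> cases y <;>
      first | exact congrArg _ (eq_of_beq hxy) | exact absurd hxy Bool.false_ne_true
  rfl {x} := by
    cases x with
    | inl c => exact beq_self_eq_true c
    | inr t => exact beq_self_eq_true t

section Tagged

variable {α : Type}

theorem isTagged_cons_cons_iff {c : α} {t : Tagg} {w : List (Sym α)} :
    IsTagged (Sum.inl c :: Sum.inr t :: w) ↔ IsTagged w :=
  ⟨fun hw => by cases hw; assumption, .cons c t⟩

theorem IsTagged.exists_eq_cons {w : List (Sym α)} (hw : IsTagged w) :
    ∃ c w', w = Sum.inl c :: w' := by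
  cases hw with
  | single c => exact ⟨c, [], rfl⟩
  | cons c t _ => exact ⟨c, _, rfl⟩

theorem IsTagged.exists_eq_append_singleton {w : List (Sym α)} (hw : IsTagged w) :
    ∃ w' c, w = w' ++ [Sum.inl c] := by
  induction hw with
  | single c => exact ⟨[], c, rfl⟩
  | cons c t _ ih =>
    obtain ⟨w', d, rfl⟩ := ih
    exact ⟨_ :: _ :: w', d, rfl⟩

theorem isTagged_append_cons_inr_iff {w z : List (Sym α)} {t : Tagg} :
    IsTagged (w ++ Sum.inr t :: z) ↔ IsTagged w ∧ IsTagged z := by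
  constructor
  · intro hu
    generalize hwz : w ++ Sum.inr t :: z = u at hu
    induction hu generalizing w with
    | single c => rcases w with _ | ⟨x, _ | ⟨y, w⟩⟩ <;> simp at hwz
    | cons c s hv ih =>
      rcases w with _ | ⟨x, _ | ⟨y, w⟩⟩
      · simp at hwz
      · simp only [List.cons_append, List.nil_append, List.cons.injEq, Sum.inr.injEq] at hwz
        obtain ⟨rfl, rfl, rfl⟩ := hwz
        exact ⟨.single c, hv⟩
      · simp only [List.cons_append, List.cons.injEq] at hwz
        obtain ⟨rfl, rfl, hwz⟩ := hwz
        exact (ih hwz).imp_left (.cons c s)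
  · rintro ⟨hw, hz⟩
    induction hw with
    | single c => exact .cons c t hz
    | cons c s _ ih => exact .cons c s ih

theorem cons_cons_cons_mem_locFull_iff {x y : α} {t : Tagg} {l : List (Sym α)}
    {Φ : Set (List (Sym α))} :
    Sum.inl x :: Sum.inr t :: Sum.inl y :: l ∈ LocFull 3 Φ ↔
      [Sum.inl x, Sum.inr t, Sum.inl y] ∈ Φ ∧ Sum.inl y :: l ∈ LocFull 3 Φ := by
  simp only [LocFull, taggedFactors, Set.mem_ofPred_eq, Set.ofPred_subset, isTagged_cons_cons_iff]
  constructor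
  · rintro ⟨hl, hΦ⟩
    refine ⟨hΦ _ ⟨rfl, .cons x t (.single y), ⟨[], l, rfl⟩⟩, hl, fun u ⟨hlen, hu, hinf⟩ => ?_⟩
    exact hΦ u ⟨hlen, hu, hinf.trans ((List.suffix_cons _ _).trans (List.suffix_cons _ _)).isInfix⟩
  · rintro ⟨hxty, hl, hΦ⟩
    refine ⟨hl, fun u ⟨hlen, hu, hinf⟩ => ?_⟩
    rcases List.infix_cons_iff.1 hinf with hpre | hinf
    · rw [List.prefix_iff_eq_take, hlen] at hpre
      simpa [hpre] using hxty
    rcases List.infix_cons_iff.1 hinf with hpre | hinf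
    · rw [List.prefix_iff_eq_take, hlen] at hpre
      rw [hpre] at hu
      cases hu
    · exact hΦ u ⟨hlen, hu, hinf⟩

theorem singleton_mem_locFull (x : α) (Φ : Set (List (Sym α))) :
    [Sum.inl x] ∈ LocFull 3 Φ :=
  ⟨.single x, fun u ⟨hlen, _, hinf⟩ => by simpa [hlen] using hinf.length_le⟩

theorem taggedFactors_subset_of_infix {u v : List (Sym α)} {Φ : Set (List (Sym α))}
    (huv : u <:+: v) (hv : taggedFactors 3 v ⊆ Φ) : taggedFactors 3 u ⊆ Φ :=
  fun _ ⟨hlen, ht, hinf⟩ => hv ⟨hlen, ht, hinf.trans huv⟩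

def dotTail (c : α) : ℕ → List (Sym α)
  | 0 => []
  | n + 1 => Sum.inr dot :: Sum.inl c :: dotTail c n

theorem cons_dotTail_append_mem_locFull_iff {c : α} {Φ : Set (List (Sym α))}
    (hc : [Sum.inl c, Sum.inr dot, Sum.inl c] ∈ Φ) (n : ℕ) (l : List (Sym α)) :
    Sum.inl c :: (dotTail c n ++ l) ∈ LocFull 3 Φ ↔ Sum.inl c :: l ∈ LocFull 3 Φ := by
  induction n with
  | zero => rfl
  | succ n ih => simp [dotTail, cons_cons_cons_mem_locFull_iff, hc, ih]

theorem isHandleBody_cons_dotTail {hash c : α} (hc : c ≠ hash) (n : ℕ) :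
    IsHandleBody hash (Sum.inl c :: dotTail c n) := by
  induction n with
  | zero => exact ⟨.single c, by simp [dotTail], by simpa [dotTail] using hc.symm⟩
  | succ n ih =>
    obtain ⟨ht, hdot, hhash⟩ := ih
    refine ⟨.cons c dot ht, ?_, ?_⟩
    · simpa [dotTail, or_imp, forall_and] using hdot
    · simpa [dotTail, hc.symm] using hhash

@[simp] theorem erase_nil : erase ([] : List (Sym α)) = [] := rfl

@[simp] theorem erase_cons_inl (c : α) (w : List (Sym α)) :
    erase (Sum.inl c :: w) = c :: erase w := rfl

@[simp] theorem erase_cons_inr (t : Tagg) (w : List (Sym α)) :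
    erase (Sum.inr t :: w) = erase w := rfl

@[simp] theorem erase_append (u v : List (Sym α)) : erase (u ++ v) = erase u ++ erase v :=
  List.filterMap_append

@[simp] theorem erase_dotTail (c : α) (n : ℕ) : erase (dotTail c n) = List.replicate n c := by
  induction n with
  | zero => rfl
  | succ n ih => simp [dotTail, ih, List.replicate_succ]

theorem count_erase [DecidableEq α] (c : α) (w : List (Sym α)) :
    (erase w).count c = w.count (Sum.inl c) := by
  induction w with
  | nil => rfl
  | cons s w ih => rcases s with d | t <;> simp [List.count_cons, ih]

end Tagged

section Reduction

variable {α : Type} {hash : α} {k : ℕ} {Φ : Set (List (Sym α))} {u v : List (Sym α)}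

theorem RStep.head?_eq (huv : RStep hash k Φ u v) : u.head? = v.head? := by
  obtain ⟨w, x, z, s, -, rfl, rfl, hu, -⟩ := huv
  obtain ⟨c, w', rfl⟩ := (isTagged_append_cons_inr_iff.1 hu.1).1.exists_eq_cons
  rfl

theorem RStep.getLast?_eq (huv : RStep hash k Φ u v) : u.getLast? = v.getLast? := by
  obtain ⟨w, x, z, s, -, rfl, rfl, hu, -⟩ := huv
  have hu' : IsTagged ((w ++ Sum.inr lb :: x) ++ Sum.inr rb :: z) := by simpa using hu.1
  obtain ⟨z', c, rfl⟩ := (isTagged_append_cons_inr_iff.1 hu').2.exists_eq_append_singleton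
  simp [List.getLast?_cons]

theorem RStep.count_eq [DecidableEq α] (huv : RStep hash k Φ u v) :
    u.count (Sum.inl hash) = v.count (Sum.inl hash) := by
  obtain ⟨w, x, z, s, ⟨-, -, hx⟩, rfl, rfl, -, -⟩ := huv
  simp [List.count_eq_zero.2 hx]

theorem Reduces.head?_eq (huv : Reduces hash k Φ u v) : u.head? = v.head? := by
  induction huv with
  | refl => rfl
  | tail _ hstep ih => exact ih.trans hstep.head?_eq

theorem Reduces.getLast?_eq (huv : Reduces hash k Φ u v) : u.getLast? = v.getLast? := by
  induction huv with
  | refl => rfl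
  | tail _ hstep ih => exact ih.trans hstep.getLast?_eq

theorem Reduces.count_eq [DecidableEq α] (huv : Reduces hash k Φ u v) :
    u.count (Sum.inl hash) = v.count (Sum.inl hash) := by
  induction huv with
  | refl => rfl
  | tail _ hstep ih => exact ih.trans hstep.count_eq

theorem IsTagged.of_wrap {w : List (Sym α)} (hw : IsTagged (wrap hash k w)) : IsTagged w :=
  (isTagged_append_cons_inr_iff.1 (isTagged_append_cons_inr_iff.1 hw).2).1

theorem wrap_three (w : List (Sym α)) :
    wrap hash 3 w = Sum.inl hash :: Sum.inr lb :: (w ++ [Sum.inr rb, Sum.inl hash]) := rfl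

theorem finalWord_three : finalWord hash 3 = [Sum.inl hash, Sum.inr dot, Sum.inl hash] := rfl

end Reduction

-- The tagged preimage of `aⁿ b aᵐ` is `leftBlock n ++ b :: rightBlock m`,
-- i.e. `[a⊙⋯⊙a]b[a⊙⋯⊙a]` with an empty block omitted together with its bracket.
def leftBlock : ℕ → List (Sym ABH)
  | 0 => []
  | n + 1 => Sum.inl a :: (dotTail a n ++ [Sum.inr rb])

def rightBlock : ℕ → List (Sym ABH)
  | 0 => []
  | m + 1 => Sum.inr lb :: Sum.inl a :: dotTail a m

theorem erase_leftBlock_append_rightBlock (n m : ℕ) :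
    erase (leftBlock n ++ Sum.inl b :: rightBlock m) =
      List.replicate n a ++ b :: List.replicate m a := by
  cases n <;> cases m <;> simp [leftBlock, rightBlock, List.replicate_succ]

theorem a_dot_a_mem_Phi7 : [Sum.inl a, Sum.inr dot, Sum.inl a] ∈ Phi7 := by simp [Phi7]

theorem wrap_leftBlock_append_rightBlock_mem_locFull (n m : ℕ) :
    wrap h 3 (leftBlock n ++ Sum.inl b :: rightBlock m) ∈ LocFull 3 Phi7 := by
  cases n <;> cases m <;>
    simp only [wrap_three, leftBlock, rightBlock, List.nil_append, List.cons_append,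
      List.append_assoc, cons_cons_cons_mem_locFull_iff,
      cons_dotTail_append_mem_locFull_iff a_dot_a_mem_Phi7] <;>
    simp [singleton_mem_locFull, Phi7]

theorem wrap_cons_dotTail_mem_locFull (n : ℕ) :
    wrap h 3 (Sum.inl a :: dotTail a n) ∈ LocFull 3 Phi7 := by
  simpa [wrap_three, cons_cons_cons_mem_locFull_iff, singleton_mem_locFull, Phi7] using
    (cons_dotTail_append_mem_locFull_iff a_dot_a_mem_Phi7 n [Sum.inr rb, Sum.inl h]).2

theorem reduces_leftBlock (n m : ℕ) :
    Reduces h 3 Phi7 (wrap h 3 (leftBlock n ++ Sum.inl b :: rightBlock m))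
      (wrap h 3 (Sum.inl b :: rightBlock m)) := by
  cases n with
  | zero => exact .refl
  | succ n =>
    refine .single ⟨[Sum.inl h], Sum.inl a :: dotTail a n,
      Sum.inl b :: (rightBlock m ++ [Sum.inr rb, Sum.inl h]), lb,
      isHandleBody_cons_dotTail (by decide) n, by simp [wrap_three, leftBlock],
      by simp [wrap_three],
      wrap_leftBlock_append_rightBlock_mem_locFull (n + 1) m,
      wrap_leftBlock_append_rightBlock_mem_locFull 0 m⟩

theorem reduces_rightBlock (m : ℕ) :
    Reduces h 3 Phi7 (wrap h 3 (Sum.inl b :: rightBlock m)) (wrap h 3 [Sum.inl b]) := by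
  cases m with
  | zero => exact .refl
  | succ m =>
    refine .single ⟨[Sum.inl h, Sum.inr lb, Sum.inl b], Sum.inl a :: dotTail a m, [Sum.inl h], rb,
      isHandleBody_cons_dotTail (by decide) m, by simp [wrap_three, rightBlock], rfl,
      wrap_leftBlock_append_rightBlock_mem_locFull 0 (m + 1),
      wrap_leftBlock_append_rightBlock_mem_locFull 0 0⟩

theorem finalWord_mem_locFull : finalWord h 3 ∈ LocFull 3 Phi7 := by
  simp [finalWord_three, cons_cons_cons_mem_locFull_iff, singleton_mem_locFull, Phi7]

theorem rStep_wrap_b : RStep h 3 Phi7 (wrap h 3 [Sum.inl b]) (finalWord h 3) :=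
  ⟨[Sum.inl h], [Sum.inl b], [Sum.inl h], dot, ⟨.single b, by simp, by simp⟩, rfl, rfl,
    wrap_leftBlock_append_rightBlock_mem_locFull 0 0, finalWord_mem_locFull⟩

theorem rStep_wrap_cons_dotTail (n : ℕ) :
    RStep h 3 Phi7 (wrap h 3 (Sum.inl a :: dotTail a n)) (finalWord h 3) :=
  ⟨[Sum.inl h], Sum.inl a :: dotTail a n, [Sum.inl h], dot, isHandleBody_cons_dotTail (by decide) n,
    rfl, rfl, wrap_cons_dotTail_mem_locFull n, finalWord_mem_locFull⟩

theorem L7_subset_red : L7 ⊆ Red h 3 Phi7 := by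
  rintro x (⟨n, m, rfl⟩ | ⟨n, hn, rfl⟩)
  · have hred : Reduces h 3 Phi7 (wrap h 3 (leftBlock n ++ Sum.inl b :: rightBlock m))
        (finalWord h 3) :=
      (reduces_leftBlock n m).trans ((reduces_rightBlock m).tail rStep_wrap_b)
    exact ⟨_, ⟨(wrap_leftBlock_append_rightBlock_mem_locFull n m).1.of_wrap, hred⟩,
      erase_leftBlock_append_rightBlock n m⟩
  · obtain ⟨n, rfl⟩ := Nat.exists_eq_add_of_le' hn
    exact ⟨Sum.inl a :: dotTail a n, ⟨(wrap_cons_dotTail_mem_locFull n).1.of_wrap,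
      .single (rStep_wrap_cons_dotTail n)⟩, by simp [List.replicate_succ]⟩

theorem eq_b_or_b_not_mem_of_isHandleBody {x : List (Sym ABH)} (hx : IsHandleBody h x)
    (hΦ : taggedFactors 3 x ⊆ Phi7) : x = [Sum.inl b] ∨ Sum.inl b ∉ x := by
  obtain ⟨ht, hdot, hh⟩ := hx
  induction ht with
  | single c => cases c <;> simp
  | cons c t hw ih =>
    obtain rfl : t = dot := hdot t (by simp)
    obtain ⟨d, w, rfl⟩ := hw.exists_eq_cons
    have hcd : [Sum.inl c, Sum.inr dot, Sum.inl d] ∈ Phi7 :=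
      hΦ ⟨rfl, .cons c dot (.single d), ⟨[], w, rfl⟩⟩
    have hch : c ≠ h := fun hc => hh (by simp [hc])
    obtain ⟨rfl, rfl⟩ : c = a ∧ d = a := by simpa [Phi7, hch] using hcd
    have hrest := ih
      (taggedFactors_subset_of_infix (List.infix_cons <| List.infix_cons <| List.infix_refl _) hΦ)
      (fun t ht => hdot t (by simp [ht])) (fun hmem => hh (by simp [hmem]))
    simp_all

theorem eq_singleton_hash_of_reduces {w z : List (Sym ABH)}
    (hu : w ++ Sum.inr lb :: Sum.inl b :: Sum.inr rb :: z ∈ LocFull 3 Phi7)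
    (hred : Reduces h 3 Phi7 (w ++ Sum.inr lb :: Sum.inl b :: Sum.inr rb :: z) (finalWord h 3)) :
    w = [Sum.inl h] ∧ z = [Sum.inl h] := by
  obtain ⟨hw, hz⟩ := isTagged_append_cons_inr_iff.1 hu.1
  obtain ⟨w, c, rfl⟩ := hw.exists_eq_append_singleton
  obtain ⟨d, z, rfl⟩ := (isTagged_cons_cons_iff.1 hz).exists_eq_cons
  have hc : [Sum.inl c, Sum.inr lb, Sum.inl b] ∈ Phi7 :=
    hu.2 ⟨rfl, .cons c lb (.single b), ⟨w, Sum.inr rb :: Sum.inl d :: z, by simp⟩⟩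
  have hd : [Sum.inl b, Sum.inr rb, Sum.inl d] ∈ Phi7 :=
    hu.2 ⟨rfl, .cons b rb (.single d), ⟨w ++ [Sum.inl c, Sum.inr lb], z, by simp⟩⟩
  obtain rfl : c = h := by simpa [Phi7] using hc
  obtain rfl : d = h := by simpa [Phi7] using hd
  have hcount : w.count (Sum.inl h) + (z.count (Sum.inl h) + 1 + 1) = 2 := by
    simpa [finalWord_three] using hred.count_eq
  refine ⟨?_, ?_⟩
  · rcases w with _ | ⟨s, w⟩
    · rfl
    · obtain rfl : s = Sum.inl h := by simpa [finalWord_three] using hred.head?_eq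
      rw [List.count_cons_self] at hcount
      omega
  · rcases z.eq_nil_or_concat' with rfl | ⟨z, s, rfl⟩
    · rfl
    · obtain rfl : s = Sum.inl h := by
        simpa [finalWord_three, List.getLast?_cons] using hred.getLast?_eq
      rw [List.count_append, List.count_singleton_self] at hcount
      omega

theorem count_b_le_one_of_reduces {u : List (Sym ABH)} (hu : Reduces h 3 Phi7 u (finalWord h 3)) :
    u.count (Sum.inl b) ≤ 1 := by
  induction hu using Relation.ReflTransGen.head_induction_on with
  | refl => simp [finalWord_three]
  | head hstep hrest ih =>
    have hred := Relation.ReflTransGen.head hstep hrest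
    obtain ⟨w, x, z, s, hx, rfl, rfl, hloc, -⟩ := hstep
    rcases eq_b_or_b_not_mem_of_isHandleBody hx
      (taggedFactors_subset_of_infix ⟨w ++ [Sum.inr lb], Sum.inr rb :: z, by simp⟩ hloc.2)
      with rfl | hbx
    · obtain ⟨rfl, rfl⟩ := eq_singleton_hash_of_reduces hloc hred
      simp
    · simpa [List.count_eq_zero.2 hbx] using ih

theorem mem_L7_of_count {x : List ABH} (hx : x ≠ []) (hh : x.count h = 0) (hb : x.count b ≤ 1) :
    x ∈ L7 := by
  have eq_replicate : ∀ y : List ABH, y.count h = 0 → y.count b = 0 →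
      y = List.replicate y.length a := by
    intro y hyh hyb
    refine List.eq_replicate_iff.2 ⟨rfl, fun c hc => ?_⟩
    cases c
    · rfl
    · exact absurd hyb (List.count_pos_iff.2 hc).ne'
    · exact absurd hyh (List.count_pos_iff.2 hc).ne'
  by_cases hbx : b ∈ x
  · obtain ⟨s, t, rfl⟩ := List.append_of_mem hbx
    rw [List.count_append, List.count_cons_of_ne (by decide)] at hh
    rw [List.count_append, List.count_cons_self] at hb
    refine Or.inl ⟨s.length, t.length, ?_⟩
    rw [← eq_replicate s (by omega) (by omega), ← eq_replicate t (by omega) (by omega)]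
  · exact Or.inr ⟨x.length, List.length_pos_iff.2 hx, eq_replicate x hh (List.count_eq_zero.2 hbx)⟩

theorem red_subset_L7 : Red h 3 Phi7 ⊆ L7 := by
  rintro _ ⟨w, ⟨hw, hred⟩, rfl⟩
  have hh : w.count (Sum.inl h) = 0 := by
    simpa [wrap_three, finalWord_three] using hred.count_eq
  have hb : w.count (Sum.inl b) ≤ 1 := by
    simpa [wrap_three] using count_b_le_one_of_reduces hred
  obtain ⟨c, w', rfl⟩ := hw.exists_eq_cons
  exact mem_L7_of_count (by simp) (by rwa [count_erase]) (by rwa [count_erase])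

theorem nonConflictual_Phi7 : NonConflictual Phi7 := by
  rintro ⟨x, hx, y, hy, hne, he⟩
  simp only [Phi7, Set.mem_insert_iff, Set.mem_singleton_iff] at hx hy
  rcases hx with rfl | rfl | rfl | rfl | rfl | rfl | rfl | rfl <;>
    rcases hy with rfl | rfl | rfl | rfl | rfl | rfl | rfl | rfl <;>
      simp_all

/-- From the proof of Theorem 2: `a* b a* ∪ a⁺` is the maximal language
`Red(Φ)` of order 3 defined by the non-conflictual set
`Φ = {#[b, a]b, #⊙#, #[a, b]#, a⊙a, b[a, a]#}`. -/
theorem red_example : NonConflictual Phi7 ∧ Red ABH.h 3 Phi7 = L7 :=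
  ⟨nonConflictual_Phi7, red_subset_L7.antisymm L7_subset_red⟩

end HOP
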